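/- arXiv:1403.1814 — 8 statements merged into one kernel-verified Lean document; each statement's English description precedes it below -/
import Mathlib

section
/- Let K be a field and 1 ≤ n < r. For n < j ≤ r let f_j : K^n → K, let h_j : K^{j−1} → K be nowhere zero, and let g_j : K^{j−1} → K. Define φ : K^r → K^r by φ(x) = (x_1,…,x_n, φ_{n+1}(x), …, φ_r(x)) where φ_j(x) = h_j(x_1,…,x_{j−1})·(x_j − f_j(x_1,…,x_n)) + g_j(x_1,…,x_{j−1}). Let X = {x ∈ K^r : x_j = f_j(x_1,…,x_n) for all n < j ≤ r}. Then φ(X) equals the linear subspace {x ∈ K^r : x_{n+1} = … = x_r = 0} if and only if for every j with n < j ≤ r, g_j(x_1,…,x_{j−1}) = 0 for every point x ∈ X. -/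
/-- Let `K` be a field, `1 ≤ n < r`.  For each coordinate `j` beyond the
first `n`, let `f j : K^n → K`, let `h j` be a nowhere-zero function of the first `j`
coordinates and `g j` an arbitrary function of the first `j` coordinates.  Define
`φ : K^r → K^r` fixing the first `n` coordinates and with
`φ_j(x) = h_j(x_1,…,x_{j−1})·(x_j − f_j(x_1,…,x_n)) + g_j(x_1,…,x_{j−1})` for the remaining
ones.  Let `X` be the graph of the `f_j`'s.  Then `φ(X)` equals the linear subspace
`{x : x_j = 0 for all j ≥ n}` if and only if each `g_j` vanishes at (the initial
coordinates of) every point of `X`. -/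
theorem image_graph_eq_linear_iff {K : Type*} [Field K] {n r : ℕ}
    (hn : 1 ≤ n) (hnr : n < r)
    (f : Fin r → (Fin n → K) → K)
    (h g : (j : Fin r) → (Fin j → K) → K)
    (hh : ∀ j : Fin r, n ≤ (j : ℕ) → ∀ v : Fin j → K, h j v ≠ 0)
    (φ : (Fin r → K) → (Fin r → K))
    (hφ : ∀ x j, φ x j = if (j : ℕ) < n then x j
      else h j (fun i : Fin j => x ⟨i, i.2.trans j.2⟩) *
          (x j - f j (fun i : Fin n => x ⟨i, i.2.trans hnr⟩))
        + g j (fun i : Fin j => x ⟨i, i.2.trans j.2⟩)) :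
    φ '' {x : Fin r → K | ∀ j : Fin r, n ≤ (j : ℕ) →
        x j = f j (fun i : Fin n => x ⟨i, i.2.trans hnr⟩)} =
      {x : Fin r → K | ∀ j : Fin r, n ≤ (j : ℕ) → x j = 0} ↔
    ∀ j : Fin r, n ≤ (j : ℕ) →
      ∀ x ∈ {x : Fin r → K | ∀ j' : Fin r, n ≤ (j' : ℕ) →
        x j' = f j' (fun i : Fin n => x ⟨i, i.2.trans hnr⟩)},
        g j (fun i : Fin j => x ⟨i, i.2.trans j.2⟩) = 0 := by
  constructor
  · intro hEq j hj x hx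
    have hmem : φ x ∈ {x : Fin r → K | ∀ j : Fin r, n ≤ (j : ℕ) → x j = 0} := by
      rw [← hEq]; exact ⟨x, hx, rfl⟩
    have h0 := hmem j hj
    rw [hφ, if_neg (not_lt.2 hj), hx j hj] at h0
    simpa using h0
  · intro hg
    ext y
    constructor
    · rintro ⟨x, hx, rfl⟩ j hj
      rw [hφ, if_neg (not_lt.2 hj), hx j hj]
      simpa using hg j hj x hx
    · intro hy
      set x : Fin r → K := fun j =>
        if (j : ℕ) < n then y j else f j (fun i : Fin n => y ⟨i, i.2.trans hnr⟩) with hxdef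
      have hxlt : ∀ j : Fin r, (j : ℕ) < n → x j = y j := fun j hj => if_pos hj
      have hxX : x ∈ {x : Fin r → K | ∀ j' : Fin r, n ≤ (j' : ℕ) →
          x j' = f j' (fun i : Fin n => x ⟨i, i.2.trans hnr⟩)} := by
        intro j hj
        have : x j = f j (fun i : Fin n => y ⟨i, i.2.trans hnr⟩) := if_neg (not_lt.2 hj)
        rw [this]
        congr 1
        funext i
        exact (hxlt ⟨i, i.2.trans hnr⟩ i.2).symm
      refine ⟨x, hxX, ?_⟩
      funext j
      rw [hφ]
      by_cases hj : (j : ℕ) < n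
      · rw [if_pos hj, hxlt j hj]
      · push_neg at hj
        rw [if_neg (not_lt.2 hj), hxX j hj, hy j hj]
        simpa using hg j hj x hxX
end

section
/- Let K be a field and n ≥ 0. Let M be an (n+2) × (n+2) alternating matrix over K (i.e. Mᵀ = −M and all diagonal entries are zero) with M₀₁ = 1, and define the n × n matrix N by N_{ij} = M_{i+2,j+2} − M_{0,i+2}·M_{1,j+2} + M_{0,j+2}·M_{1,i+2} for 0 ≤ i,j ≤ n−1 (indices of M running from 0). Then N is alternating and rank(M) = 2 + rank(N). -/
/-!
Split the indices as `{0, 1} ⊔ {2, …, n + 1}`. The top-left block of `M` is then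
`!![0, 1; -1, 0]`, which is invertible since `M₀₁ = 1`, and block Gaussian elimination
against it turns `M` into a block diagonal matrix whose lower block is the Schur complement.
With the inverse `!![0, -1; 1, 0]` that Schur complement is exactly `N`, so the rank of `M`
is `2` plus the rank of `N`.
-/

open Matrix

namespace Matrix

variable {K : Type*} [Field K]

theorem rank_fromBlocks_zero₁₂_zero₂₁ {m n o p : Type*} [Fintype n] [Fintype p]
    (A : Matrix m n K) (D : Matrix o p K) :
    (fromBlocks A 0 0 D).rank = A.rank + D.rank := by
  let eIn := LinearEquiv.sumArrowLequivProdArrow n p K K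
  let eOut := LinearEquiv.sumArrowLequivProdArrow m o K K
  have hmulVecLin : (fromBlocks A 0 0 D).mulVecLin =
      eOut.symm.toLinearMap ∘ₗ (A.mulVecLin.prodMap D.mulVecLin) ∘ₗ eIn.toLinearMap := by
    ext v i
    cases i <;> simp [eIn, eOut, fromBlocks_mulVec, LinearEquiv.sumArrowLequivProdArrow,
      Equiv.sumArrowEquivProdArrow]
  let eProd : (LinearMap.range A.mulVecLin).prod (LinearMap.range D.mulVecLin) ≃ₗ[K]
      LinearMap.range A.mulVecLin × LinearMap.range D.mulVecLin :=
    { toFun x := (⟨x.1.1, x.2.1⟩, ⟨x.1.2, x.2.2⟩)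
      invFun x := ⟨(x.1, x.2), x.1.2, x.2.2⟩
      map_add' _ _ := rfl
      map_smul' _ _ := rfl
      left_inv _ := rfl
      right_inv _ := rfl }
  rw [rank, hmulVecLin, LinearMap.range_comp, LinearEquiv.finrank_map_eq,
    LinearMap.range_comp_of_range_eq_top _ (LinearMap.range_eq_top.mpr eIn.surjective),
    LinearMap.range_prodMap, eProd.finrank_eq, Module.finrank_prod]
  rfl

theorem rank_fromBlocks_of_invertible₁₁ {m n : Type*} [Fintype m] [Fintype n]
    [DecidableEq m] [DecidableEq n] (A : Matrix m m K) (B : Matrix m n K) (C : Matrix n m K)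
    (D : Matrix n n K) [Invertible A] :
    (fromBlocks A B C D).rank = Fintype.card m + (D - C * ⅟A * B).rank := by
  have hLower : IsUnit (fromBlocks 1 0 (C * ⅟A) (1 : Matrix n n K)).det := by simp
  have hUpper : IsUnit (fromBlocks 1 (⅟A * B) 0 (1 : Matrix n n K)).det := by simp
  rw [fromBlocks_eq_of_invertible₁₁, rank_mul_eq_left_of_isUnit_det _ _ hUpper,
    rank_mul_eq_right_of_isUnit_det _ _ hLower, rank_fromBlocks_zero₁₂_zero₂₁,
    rank_of_isUnit A (isUnit_of_invertible A)]

end Matrix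

def finTwoSumEquiv (n : ℕ) : Fin 2 ⊕ Fin n ≃ Fin (n + 2) :=
  finSumFinEquiv.trans (finCongr (add_comm 2 n))

@[simp] theorem finTwoSumEquiv_inl_zero (n : ℕ) : finTwoSumEquiv n (Sum.inl 0) = 0 := by
  ext; simp [finTwoSumEquiv]

@[simp] theorem finTwoSumEquiv_inl_one (n : ℕ) : finTwoSumEquiv n (Sum.inl 1) = 1 := by
  ext; simp [finTwoSumEquiv]

@[simp] theorem finTwoSumEquiv_inr (n : ℕ) (j : Fin n) :
    finTwoSumEquiv n (Sum.inr j) = j.succ.succ := by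
  ext; simp [finTwoSumEquiv]

/-- Let `K` be a field and `n ≥ 0`.  Let `M` be an `(n+2) × (n+2)`
alternating matrix (`Mᵀ = −M` with zero diagonal) with `M₀₁ = 1`, and let `N` be the
`n × n` matrix with `N_{ij} = M_{i+2,j+2} − M_{0,i+2}·M_{1,j+2} + M_{0,j+2}·M_{1,i+2}`.
Then `N` is alternating and `rank M = 2 + rank N`. -/
theorem alternating_rank_eq_two_add {K : Type*} [Field K] {n : ℕ}
    (M : Matrix (Fin (n + 2)) (Fin (n + 2)) K)
    (hMalt : Mᵀ = -M) (hMdiag : ∀ i, M i i = 0) (hM01 : M 0 1 = 1)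
    (N : Matrix (Fin n) (Fin n) K)
    (hN : ∀ i j, N i j = M i.succ.succ j.succ.succ
      - M 0 i.succ.succ * M 1 j.succ.succ + M 0 j.succ.succ * M 1 i.succ.succ) :
    (Nᵀ = -N ∧ ∀ i, N i i = 0) ∧ M.rank = 2 + N.rank := by
  have hskew (i j) : M j i = -M i j := by simpa using congrFun₂ hMalt i j
  refine ⟨⟨?_, fun i => by simp [hN, hMdiag]⟩, ?_⟩
  · ext i j
    simp only [transpose_apply, Matrix.neg_apply, hN, hskew i.succ.succ j.succ.succ]
    ring
  let J : Matrix (Fin 2) (Fin 2) K := !![0, 1; -1, 0]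
  let : Invertible J := invertibleOfRightInverse J (-J) <| by
    ext i j; fin_cases i <;> fin_cases j <;> simp [J]
  let e := finTwoSumEquiv n
  have hPivot : (M.submatrix e e).toBlocks₁₁ = J := by
    ext i j; fin_cases i <;> fin_cases j <;> simp [e, J, toBlocks₁₁, hMdiag, hM01, hskew 0 1]
  have hSchur : (M.submatrix e e).toBlocks₂₂ -
      (M.submatrix e e).toBlocks₂₁ * ⅟J * (M.submatrix e e).toBlocks₁₂ = N := by
    rw [show ⅟J = -J from rfl]
    ext i j
    simp only [toBlocks₁₂, toBlocks₂₁, toBlocks₂₂, submatrix_apply, Matrix.sub_apply, of_apply,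
      mul_apply, Fin.sum_univ_two, e, finTwoSumEquiv_inl_zero, finTwoSumEquiv_inl_one,
      finTwoSumEquiv_inr, J, neg_of, neg_cons, neg_zero, neg_empty, neg_neg, cons_val',
      cons_val_fin_one, cons_val_zero, cons_val_one, hskew 0 i.succ.succ, hskew 1 i.succ.succ, hN]
    ring
  rw [← rank_submatrix M e e, ← fromBlocks_toBlocks (M.submatrix e e), hPivot,
    rank_fromBlocks_of_invertible₁₁, hSchur, Fintype.card_fin]
end

section
/- Let K be a commutative ring, n ≥ 1, and a : Fin n → K × K. For I ⊆ {1,…,n} define x(I) = ∏_{i∈I} (a_i)₂ · ∏_{i∉I} (a_i)₁. Then for every nonempty I ⊆ {1,…,n} and every set partition π of I, x(∅)^{n−|π|} · ∏_{B∈π} x(B) = ∏_{i∉I} (a_i)₁ⁿ · ∏_{i∈I} ((a_i)₁^{n−1}·(a_i)₂); in particular this product is independent of the partition π. -/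
/-!
An index `i ∉ I` lies in the complement of every block of `π`, and an index `i ∈ I` in the
complement of all blocks but one. Hence `∏_{B∈π} x(B)` contains `(a i).1` with exponent `|π|`
for `i ∉ I` and `|π| - 1` for `i ∈ I`, and the factor `x(∅)^{n-|π|}` raises both exponents by
`n - |π|`, which no longer depends on `π`.
-/

open Finset

namespace Finpartition

variable {ι M : Type*} [DecidableEq ι] [CommMonoid M] {s : Finset ι} (P : Finpartition s)

theorem prod_prod_parts (f : ι → M) : ∏ B ∈ P.parts, ∏ i ∈ B, f i = ∏ i ∈ s, f i := by
  conv_rhs => rw [← P.biUnion_parts]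
  exact (prod_biUnion P.supIndep.pairwiseDisjoint).symm

theorem card_filter_notMem_parts_of_mem {i : ι} (hi : i ∈ s) :
    #{B ∈ P.parts | i ∉ B} = #P.parts - 1 := by
  have h_mem : {B ∈ P.parts | i ∈ B} = {P.part i} := by
    ext B
    simp only [mem_filter, mem_singleton]
    constructor
    · rintro ⟨hB, hiB⟩
      exact P.eq_of_mem_parts hB (P.part_mem.2 hi) hiB (P.mem_part hi)
    · rintro rfl
      exact ⟨P.part_mem.2 hi, P.mem_part hi⟩
  have h_split := card_filter_add_card_filter_not (s := P.parts) (fun B => i ∈ B)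
  rw [h_mem, card_singleton] at h_split
  omega

theorem card_filter_notMem_parts_of_notMem {i : ι} (hi : i ∉ s) :
    #{B ∈ P.parts | i ∉ B} = #P.parts :=
  congrArg card <| filter_true_of_mem fun _ hB hiB => hi (P.le hB hiB)

theorem prod_prod_compl_parts [Fintype ι] (f : ι → M) :
    ∏ B ∈ P.parts, ∏ i ∈ Bᶜ, f i
      = (∏ i ∈ s, f i ^ (#P.parts - 1)) * ∏ i ∈ sᶜ, f i ^ #P.parts := by
  calc ∏ B ∈ P.parts, ∏ i ∈ Bᶜ, f i
      = ∏ i, ∏ B ∈ P.parts with i ∉ B, f i :=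
        prod_comm' fun B i => by simp [and_comm]
    _ = ∏ i, f i ^ #{B ∈ P.parts | i ∉ B} := by simp only [prod_const]
    _ = _ := by
      rw [← prod_mul_prod_compl s]
      congr 1
      · exact prod_congr rfl fun i hi => by rw [P.card_filter_notMem_parts_of_mem hi]
      · exact prod_congr rfl fun i hi => by
          rw [P.card_filter_notMem_parts_of_notMem (mem_compl.1 hi)]

end Finpartition

theorem segre_partition_product_independent_general {K : Type*} [CommRing K] {n : ℕ}
    (a : Fin n → K × K)
    (x : Finset (Fin n) → K)
    (hx : ∀ I : Finset (Fin n), x I = (∏ i ∈ I, (a i).2) * ∏ i ∈ Iᶜ, (a i).1) :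
    ∀ I : Finset (Fin n), I.Nonempty → ∀ π : Finpartition I,
      x ∅ ^ (n - π.parts.card) * ∏ B ∈ π.parts, x B
        = (∏ i ∈ Iᶜ, (a i).1 ^ n) * ∏ i ∈ I, ((a i).1 ^ (n - 1) * (a i).2) := by
  intro I hI π
  set k := #π.parts
  have hk : 1 ≤ k := card_pos.2 (π.parts_nonempty hI.ne_empty)
  have hkn : k ≤ n := π.card_parts_le_card.trans (by simpa using I.card_le_univ)
  have hx_empty : x ∅ = ∏ i, (a i).1 := by simp [hx]
  calc x ∅ ^ (n - k) * ∏ B ∈ π.parts, x B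
      = (∏ i ∈ I, (a i).1 ^ (n - k)) * (∏ i ∈ Iᶜ, (a i).1 ^ (n - k)) *
          ((∏ i ∈ I, (a i).2) * ((∏ i ∈ I, (a i).1 ^ (k - 1)) * ∏ i ∈ Iᶜ, (a i).1 ^ k)) := by
        rw [hx_empty, ← prod_pow, ← prod_mul_prod_compl I, prod_congr rfl fun B _ => hx B,
          prod_mul_distrib, π.prod_prod_parts, π.prod_prod_compl_parts]
    _ = (∏ i ∈ Iᶜ, (a i).1 ^ (n - k) * (a i).1 ^ k) *
          ∏ i ∈ I, ((a i).1 ^ (n - k) * (a i).1 ^ (k - 1) * (a i).2) := by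
        simp only [prod_mul_distrib]
        ring
    _ = (∏ i ∈ Iᶜ, (a i).1 ^ n) * ∏ i ∈ I, ((a i).1 ^ (n - 1) * (a i).2) := by
        simp only [← pow_add, Nat.sub_add_cancel hkn, Nat.sub_add_sub_cancel hkn hk]

/-- Let `K` be a commutative ring, `n ≥ 1`, `a : Fin n → K × K`, and for
`I ⊆ [n]` let `x(I) = ∏_{i∈I} (a i).2 · ∏_{i∉I} (a i).1`.  Then for every nonempty `I` and
every set partition `π` of `I`,
`x(∅)^{n−|π|} · ∏_{B∈π} x(B) = ∏_{i∉I} (a i).1ⁿ · ∏_{i∈I} ((a i).1^{n−1}·(a i).2)`;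
in particular this product does not depend on `π`. -/
theorem segre_partition_product_independent {K : Type*} [CommRing K] {n : ℕ} (hn : 1 ≤ n)
    (a : Fin n → K × K)
    (x : Finset (Fin n) → K)
    (hx : ∀ I : Finset (Fin n), x I = (∏ i ∈ I, (a i).2) * ∏ i ∈ Iᶜ, (a i).1) :
    ∀ I : Finset (Fin n), I.Nonempty → ∀ π : Finpartition I,
      x ∅ ^ (n - π.parts.card) * ∏ B ∈ π.parts, x B
        = (∏ i ∈ Iᶜ, (a i).1 ^ n) * ∏ i ∈ I, ((a i).1 ^ (n - 1) * (a i).2) :=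
  segre_partition_product_independent_general a x hx
end

section
/- Let K be a commutative ring, n ≥ 1, a : Fin n → K × K, and for I ⊆ {1,…,n} define x(I) = ∏_{i∈I} (a_i)₂ · ∏_{i∉I} (a_i)₁. Fix I ⊆ {1,…,n} with |I| ≥ 2 and let P be any finite set of set partitions of I, partially ordered by refinement, which contains both the partition of I into singletons and the one-block partition {I}; let μ_P be the Möbius function of the poset P. Then ∑_{π ∈ P} μ_P(π, ⊤) · x(∅)^{n−|π|} · ∏_{B∈π} x(B) = 0, where ⊤ = {I} is the greatest element of P and |π| is the number of blocks of π. -/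
/-!
On the Segre variety the coordinates satisfy the quadratic relations `x(B) x(C) = x(B ∪ C) x(∅)`
for disjoint `B, C`, so for every partition `π` of `I` into `k` blocks
`x(∅)^(n-k) ∏_{B∈π} x(B) = x(I) x(∅)^(n-1)` does not depend on `π`. The sum therefore equals
`x(I) x(∅)^(n-1) ∑_{π∈P} μ(π,⊤)`, and `∑_{π∈P} μ(π,⊤) = 0` because `P` has a least element
`⊥ ≠ ⊤`: this is the dual Möbius recursion, which follows from the defining one since a one-sided
inverse of the zeta matrix of `P` is two-sided.
-/

open Finset

section Mobius

open scoped Classical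

variable {A R : Type*} [PartialOrder A] [CommRing R]

structure IsMobiusOn (P : Finset A) (μ : A → A → R) : Prop where
  apply_self : ∀ π ∈ P, μ π π = 1
  apply_of_not_le : ∀ π ∈ P, ∀ ν ∈ P, ¬ π ≤ ν → μ π ν = 0
  apply_of_lt : ∀ π ∈ P, ∀ ν ∈ P, π < ν →
    μ π ν = -∑ σ ∈ P.filter (fun σ => π ≤ σ ∧ σ < ν), μ π σ

namespace IsMobiusOn

variable {P : Finset A} {μ : A → A → R} {π ν : A}

theorem sum_filter_lt_eq_sum_Ico (hμ : IsMobiusOn P μ) (hπ : π ∈ P) :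
    ∑ σ ∈ P.filter (· < ν), μ π σ = ∑ σ ∈ P.filter (fun σ => π ≤ σ ∧ σ < ν), μ π σ := by
  refine (sum_subset (fun σ hσ => ?_) fun σ hσ hσ' => ?_).symm
  · simp only [mem_filter] at hσ ⊢
    exact ⟨hσ.1, hσ.2.2⟩
  · simp only [mem_filter, not_and] at hσ hσ'
    exact hμ.apply_of_not_le π hπ σ hσ.1 fun h => hσ' hσ.1 h hσ.2

theorem sum_filter_le (hμ : IsMobiusOn P μ) (hπ : π ∈ P) (hν : ν ∈ P) :
    ∑ σ ∈ P.filter (· ≤ ν), μ π σ = if π = ν then 1 else 0 := by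
  have hsplit : P.filter (· ≤ ν) = insert ν (P.filter (· < ν)) := by
    ext σ
    simp only [mem_filter, mem_insert, le_iff_eq_or_lt]
    constructor
    · rintro ⟨hσ, rfl | h⟩ <;> simp_all
    · rintro (rfl | ⟨hσ, h⟩) <;> simp_all
  rw [hsplit, sum_insert (by simp), hμ.sum_filter_lt_eq_sum_Ico hπ]
  by_cases hle : π ≤ ν
  · rcases hle.eq_or_lt with rfl | hlt
    · rw [hμ.apply_self π hπ, if_pos rfl,
        filter_false_of_mem fun σ _ h => (h.1.trans_lt h.2).false]
      simp
    · rw [hμ.apply_of_lt π hπ ν hν hlt, if_neg hlt.ne]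
      ring
  · rw [hμ.apply_of_not_le π hπ ν hν hle, if_neg (fun h => hle h.le),
      filter_false_of_mem fun σ _ h => hle (h.1.trans h.2.le)]
    simp

theorem sum_filter_ge (hμ : IsMobiusOn P μ) (hπ : π ∈ P) (hν : ν ∈ P) :
    ∑ σ ∈ P.filter (π ≤ ·), μ σ ν = if π = ν then 1 else 0 := by
  let M : Matrix P P R := .of fun σ τ => μ σ τ
  let Z : Matrix P P R := .of fun σ τ => if σ.1 ≤ τ.1 then 1 else 0
  have hMZ : M * Z = 1 := by
    ext σ τ
    simp only [M, Z, Matrix.mul_apply, Matrix.of_apply, Matrix.one_apply, mul_ite, mul_one,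
      mul_zero]
    rw [sum_coe_sort P (fun ρ => if ρ ≤ τ.1 then μ σ ρ else 0), ← sum_filter,
      hμ.sum_filter_le σ.2 τ.2]
    exact if_congr Subtype.ext_iff.symm rfl rfl
  have hZM : (Z * M) ⟨π, hπ⟩ ⟨ν, hν⟩ = (1 : Matrix P P R) ⟨π, hπ⟩ ⟨ν, hν⟩ := by
    rw [mul_eq_one_comm.mp hMZ]
  simp only [M, Z, Matrix.mul_apply, Matrix.one_apply, ite_mul, one_mul, zero_mul,
    Matrix.of_apply, Subtype.mk.injEq] at hZM
  rwa [sum_coe_sort P (fun ρ => if π ≤ ρ then μ ρ ν else 0), ← sum_filter] at hZM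

theorem sum_eq_zero_of_isBot {b t : A} (hμ : IsMobiusOn P μ) (hb : b ∈ P) (ht : t ∈ P)
    (hbot : ∀ π ∈ P, b ≤ π) (hbt : b ≠ t) : ∑ π ∈ P, μ π t = 0 := by
  simpa [filter_true_of_mem hbot, hbt] using hμ.sum_filter_ge hb ht

end IsMobiusOn

end Mobius

theorem Finpartition.bot_ne_top_of_one_lt_card {α : Type*} [DecidableEq α] {s : Finset α}
    (hs : 1 < #s) : (⊥ : Finpartition s) ≠ ⊤ := by
  intro h
  have := card_le_card (Finpartition.parts_top_subset s)
  rw [← h, Finpartition.card_bot, card_singleton] at this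
  omega

section Segre

variable {ι K : Type*} [Fintype ι] [DecidableEq ι] [CommMonoid K]

def segreCoord (a : ι → K × K) (J : Finset ι) : K :=
  (∏ i ∈ J, (a i).2) * ∏ i ∈ Jᶜ, (a i).1

variable (a : ι → K × K)

theorem segreCoord_mul_segreCoord_of_disjoint {B C : Finset ι} (h : Disjoint B C) :
    segreCoord a B * segreCoord a C = segreCoord a (B ∪ C) * segreCoord a ∅ := by
  have hcompl : Bᶜ ∪ Cᶜ = ∅ᶜ := by
    rw [← compl_inter, disjoint_iff_inter_eq_empty.mp h]
  have h1 := prod_union_inter (s₁ := Bᶜ) (s₂ := Cᶜ) (f := fun i => (a i).1)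
  rw [hcompl, ← compl_union] at h1
  simp only [segreCoord, prod_union h, prod_empty, one_mul]
  calc _ = (∏ i ∈ B, (a i).2) * (∏ i ∈ C, (a i).2) *
        ((∏ i ∈ Bᶜ, (a i).1) * ∏ i ∈ Cᶜ, (a i).1) := by ac_rfl
    _ = _ := by rw [← h1]; ac_rfl

theorem prod_segreCoord_of_pairwiseDisjoint {S : Finset (Finset ι)} (hS : S.Nonempty)
    (hd : (S : Set (Finset ι)).PairwiseDisjoint id) :
    ∏ B ∈ S, segreCoord a B = segreCoord a (S.sup id) * segreCoord a ∅ ^ (#S - 1) := by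
  induction hS using Nonempty.cons_induction with
  | singleton B => simp
  | cons B S hB hS ih =>
    rw [coe_cons, Set.pairwiseDisjoint_insert] at hd
    have hdisj : Disjoint B (S.sup id) :=
      Finset.disjoint_sup_right.mpr fun C hC => hd.2 C hC (ne_of_mem_of_not_mem hC hB).symm
    rw [prod_cons, ih hd.1, sup_cons, card_cons, ← mul_assoc,
      segreCoord_mul_segreCoord_of_disjoint a hdisj, mul_assoc, ← pow_succ',
      Nat.sub_add_cancel hS.card_pos]
    rfl

namespace Finpartition

variable {I : Finset ι}

theorem prod_segreCoord (π : Finpartition I) (hI : I.Nonempty) :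
    ∏ B ∈ π.parts, segreCoord a B = segreCoord a I * segreCoord a ∅ ^ (#π.parts - 1) := by
  rw [prod_segreCoord_of_pairwiseDisjoint a (π.parts_nonempty hI.ne_empty)
    π.supIndep.pairwiseDisjoint, π.sup_parts]

theorem segreCoord_empty_pow_mul_prod_segreCoord (π : Finpartition I) (hI : I.Nonempty) :
    segreCoord a ∅ ^ (Fintype.card ι - #π.parts) * ∏ B ∈ π.parts, segreCoord a B =
      segreCoord a I * segreCoord a ∅ ^ (Fintype.card ι - 1) := by
  have hpos : 0 < #π.parts := (π.parts_nonempty hI.ne_empty).card_pos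
  have hle : #π.parts ≤ Fintype.card ι := π.card_parts_le_card.trans (card_le_univ I)
  rw [π.prod_segreCoord a hI, mul_left_comm, ← pow_add]
  congr 2
  omega

end Finpartition

end Segre

open scoped Classical in
theorem L_cumulant_cremona_linearizes_segre_general {K : Type*} [CommRing K] {n : ℕ}
    (a : Fin n → K × K)
    (x : Finset (Fin n) → K)
    (hx : ∀ I : Finset (Fin n), x I = (∏ i ∈ I, (a i).2) * ∏ i ∈ Iᶜ, (a i).1)
    (I : Finset (Fin n)) (hI : 2 ≤ I.card)
    (P : Finset (Finpartition I))
    (hbot : (⊥ : Finpartition I) ∈ P) (htop : (⊤ : Finpartition I) ∈ P)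
    (μ : Finpartition I → Finpartition I → ℤ)
    (hrefl : ∀ π ∈ P, μ π π = 1)
    (hnle : ∀ π ∈ P, ∀ ν ∈ P, ¬ π ≤ ν → μ π ν = 0)
    (hrec : ∀ π ∈ P, ∀ ν ∈ P, π < ν →
      μ π ν = -∑ σ ∈ P.filter (fun σ => π ≤ σ ∧ σ < ν), μ π σ) :
    ∑ π ∈ P, (μ π ⊤ : K) * x ∅ ^ (n - π.parts.card) * ∏ B ∈ π.parts, x B = 0 := by
  obtain rfl : x = segreCoord a := funext hx
  have hIne : I.Nonempty := card_pos.mp (by omega)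
  have hsum : ∑ π ∈ P, μ π ⊤ = 0 :=
    IsMobiusOn.sum_eq_zero_of_isBot ⟨hrefl, hnle, hrec⟩ hbot htop (fun π _ => bot_le)
      (Finpartition.bot_ne_top_of_one_lt_card hI)
  calc ∑ π ∈ P, (μ π ⊤ : K) * segreCoord a ∅ ^ (n - #π.parts) * ∏ B ∈ π.parts, segreCoord a B
      = ∑ π ∈ P, (μ π ⊤ : K) * (segreCoord a I * segreCoord a ∅ ^ (n - 1)) := by
        refine sum_congr rfl fun π _ => ?_
        simpa only [mul_assoc, Fintype.card_fin] using
          congrArg ((μ π ⊤ : K) * ·) (π.segreCoord_empty_pow_mul_prod_segreCoord a hIne)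
    _ = 0 := by rw [← sum_mul, ← Int.cast_sum, hsum, Int.cast_zero, zero_mul]

open scoped Classical in
/-- Let `K` be a commutative ring, `n ≥ 1`, `a : Fin n → K × K`, and for
`I ⊆ [n]` let `x(I) = ∏_{i∈I} (a i).2 · ∏_{i∉I} (a i).1`.  Fix `I` with `|I| ≥ 2` and let
`P` be a finite set of set partitions of `I` (ordered by refinement) containing the
partition into singletons (`⊥`) and the one-block partition (`⊤`); let `μ` be the Möbius
function of the poset `P` (characterized by its recursion).  Then
`∑_{π ∈ P} μ(π,⊤)·x(∅)^{n−|π|}·∏_{B∈π} x(B) = 0`. -/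
theorem L_cumulant_cremona_linearizes_segre {K : Type*} [CommRing K] {n : ℕ} (hn : 1 ≤ n)
    (a : Fin n → K × K)
    (x : Finset (Fin n) → K)
    (hx : ∀ I : Finset (Fin n), x I = (∏ i ∈ I, (a i).2) * ∏ i ∈ Iᶜ, (a i).1)
    (I : Finset (Fin n)) (hI : 2 ≤ I.card)
    (P : Finset (Finpartition I))
    (hbot : (⊥ : Finpartition I) ∈ P) (htop : (⊤ : Finpartition I) ∈ P)
    (μ : Finpartition I → Finpartition I → ℤ)
    (hrefl : ∀ π ∈ P, μ π π = 1)
    (hnle : ∀ π ∈ P, ∀ ν ∈ P, ¬ π ≤ ν → μ π ν = 0)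
    (hrec : ∀ π ∈ P, ∀ ν ∈ P, π < ν →
      μ π ν = -∑ σ ∈ P.filter (fun σ => π ≤ σ ∧ σ < ν), μ π σ) :
    ∑ π ∈ P, (μ π ⊤ : K) * x ∅ ^ (n - π.parts.card) * ∏ B ∈ π.parts, x B = 0 :=
  L_cumulant_cremona_linearizes_segre_general a x hx I hI P hbot htop μ hrefl hnle hrec
end

section
/- Let K be a commutative ring, n ≥ 1, and let x : Finset(Fin n) → K be any function with x(∅) = 1. For J ⊆ {1,…,n} define y(J) = ∑_{σ ∈ Π(J)} (−1)^{|σ|−1}·(|σ|−1)! · ∏_{B∈σ} x(B). Then for every I ⊆ {1,…,n} and every set partition ν of I, ∏_{B∈ν} x(B) = ∑_{π ∈ Π(I), π ≤ ν} ∏_{B∈π} y(B), where π ≤ ν means the partition π refines ν. -/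
/-!
Write `μ(m) = (-1)^(m-1) (m-1)!` and `x_σ = ∏_{B ∈ σ} x(B)`, so that
`y(J) = ∑_{σ ∈ Π(J)} μ(|σ|) x_σ`.
The refinements of `ν` are exactly the families of partitions of its parts, so both sides of the
theorem factor over the parts of `ν`, and it suffices to prove the moment–cumulant formula
`∑_{π ∈ Π(J)} y_π = x(J)` for `J ≠ ∅`. Expanding each `y(B)` and exchanging the sums gives
`∑_σ x_σ ∑_{π ≥ σ} ∏_{B ∈ π} μ(#{C ∈ σ | C ⊆ B})`. The coarsenings of `σ` are the partitions of the
set of parts of `σ`, and `∑_{τ ∈ Π(S)} ∏_{P ∈ τ} μ(|P|)` vanishes unless `|S| ≤ 1` (split off the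
part containing a fixed point and use `μ(m + 1) = -m μ(m)`), so only the one-block `σ` survives.
-/

open Finset

namespace Finpartition

variable {α : Type*} [DecidableEq α] {s : Finset α}

lemma subset_or_disjoint_of_le {π ν : Finpartition s} (h : π ≤ ν) {B C : Finset α}
    (hB : B ∈ ν.parts) (hC : C ∈ π.parts) : C ⊆ B ∨ Disjoint C B := by
  obtain ⟨B', hB', hCB'⟩ := h hC
  obtain rfl | hne := eq_or_ne B' B
  · exact .inl hCB'
  · exact .inr ((ν.disjoint hB' hB hne).mono_left hCB')

lemma parts_restrict_of_le {π ν : Finpartition s} (h : π ≤ ν) {B : Finset α}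
    (hB : B ∈ ν.parts) : (π.restrict (ν.le hB)).parts = {C ∈ π.parts | C ⊆ B} := by
  ext C
  simp only [restrict, mem_erase, mem_image, mem_filter, bot_eq_empty, inf_eq_inter]
  constructor
  · rintro ⟨hC, D, hD, rfl⟩
    obtain hDB | hDB := subset_or_disjoint_of_le h hB hD
    · rw [inter_eq_left.2 hDB]
      exact ⟨hD, hDB⟩
    · exact absurd (disjoint_iff_inter_eq_empty.1 hDB) hC
  · rintro ⟨hC, hCB⟩
    exact ⟨π.ne_empty hC, C, hC, inter_eq_left.2 hCB⟩

lemma bind_le (ν : Finpartition s) (Q : ∀ B ∈ ν.parts, Finpartition B) : ν.bind Q ≤ ν := by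
  intro C hC
  obtain ⟨B, hB, hCB⟩ := mem_bind.1 hC
  exact ⟨B, hB, (Q B hB).le hCB⟩

lemma filter_parts_bind (ν : Finpartition s) (Q : ∀ B ∈ ν.parts, Finpartition B)
    {B : Finset α} (hB : B ∈ ν.parts) : {C ∈ (ν.bind Q).parts | C ⊆ B} = (Q B hB).parts := by
  ext C
  simp only [mem_filter, mem_bind]
  constructor
  · rintro ⟨⟨A, hA, hCA⟩, hCB⟩
    obtain ⟨c, hc⟩ := (Q A hA).nonempty_of_mem_parts hCA
    obtain rfl := ν.eq_of_mem_parts hA hB ((Q A hA).le hCA hc) (hCB hc)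
    exact hCA
  · exact fun hC => ⟨⟨B, hB, hC⟩, (Q B hB).le hC⟩

def refinementEquiv (ν : Finpartition s) :
    {π : Finpartition s // π ≤ ν} ≃ ∀ B : ν.parts, Finpartition (B : Finset α) where
  toFun π B := π.1.restrict (ν.le B.2)
  invFun Q := ⟨ν.bind fun B hB => Q ⟨B, hB⟩, bind_le _ _⟩
  left_inv := by
    rintro ⟨π, h⟩
    have mem_restrict (A : Finset α) (hA : A ∈ ν.parts) (C : Finset α) :
        C ∈ (π.restrict (ν.le hA)).parts ↔ C ∈ π.parts ∧ C ⊆ A := by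
      rw [parts_restrict_of_le h hA, mem_filter]
    ext C
    rw [Subtype.coe_mk, mem_bind]
    constructor
    · rintro ⟨A, hA, hC⟩
      exact ((mem_restrict A hA C).1 hC).1
    · intro hC
      obtain ⟨B, hB, hCB⟩ := h hC
      exact ⟨B, hB, (mem_restrict B hB C).2 ⟨hC, hCB⟩⟩
  right_inv Q := by
    funext B
    ext1
    rw [parts_restrict_of_le (bind_le _ _) B.2, filter_parts_bind ν _ B.2]

lemma prod_parts_eq_prod_prod_filter {M : Type*} [CommMonoid M] {π ν : Finpartition s}
    (h : π ≤ ν) (f : Finset α → M) :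
    ∏ C ∈ π.parts, f C = ∏ B ∈ ν.parts, ∏ C ∈ π.parts with C ⊆ B, f C := by
  rw [← prod_biUnion]
  · congr 1
    ext C
    simp only [mem_biUnion, mem_filter]
    exact ⟨fun hC => (h hC).imp fun B ⟨hB, hCB⟩ => ⟨hB, hC, hCB⟩, fun ⟨_, _, hC, _⟩ => hC⟩
  · intro B hB B' hB' hne
    refine disjoint_left.2 fun C hC hC' => ?_
    obtain ⟨c, hc⟩ := π.nonempty_of_mem_parts (mem_filter.1 hC).1
    exact hne (ν.eq_of_mem_parts hB hB' ((mem_filter.1 hC).2 hc) ((mem_filter.1 hC').2 hc))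

lemma prod_prod_restrict_of_le {M : Type*} [CommMonoid M] {π ν : Finpartition s}
    (h : π ≤ ν) (f : Finset α → M) :
    ∏ B : ν.parts, ∏ C ∈ (π.restrict (ν.le B.2)).parts, f C = ∏ C ∈ π.parts, f C := by
  simp only [parts_restrict_of_le h (Subtype.prop _)]
  rw [prod_coe_sort ν.parts (fun B => ∏ C ∈ π.parts with C ⊆ B, f C),
    prod_parts_eq_prod_prod_filter h]

open scoped Classical in
lemma sum_refinements_prod_restrict {R : Type*} [CommSemiring R] (ν : Finpartition s)
    (g : ∀ B : ν.parts, Finpartition (B : Finset α) → R) :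
    ∑ π ∈ univ.filter (· ≤ ν), ∏ B : ν.parts, g B (π.restrict (ν.le B.2))
      = ∏ B : ν.parts, ∑ σ, g B σ := by
  rw [Fintype.prod_sum, ← (refinementEquiv ν).sum_comp, sum_subtype (p := (· ≤ ν)) _ (by simp)]
  rfl

def glue (σ : Finpartition s) (τ : Finpartition σ.parts) : Finpartition s :=
  ofExistsUnique (τ.parts.image fun P => P.sup id)
    (by
      simp only [mem_image]
      rintro _ ⟨P, hP, rfl⟩
      exact Finset.sup_le fun C hC => σ.le (τ.le hP hC))
    (by
      intro a ha
      obtain ⟨C, hC, haC⟩ := σ.exists_mem ha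
      obtain ⟨P, hP, hCP⟩ := τ.exists_mem hC
      refine ⟨P.sup id, ⟨mem_image_of_mem _ hP, mem_sup.2 ⟨C, hCP, haC⟩⟩, ?_⟩
      rintro _ ⟨hQim, haQ⟩
      obtain ⟨Q, hQ, rfl⟩ := mem_image.1 hQim
      obtain ⟨C', hC'Q, haC'⟩ := mem_sup.1 haQ
      obtain rfl := σ.eq_of_mem_parts hC (τ.le hQ hC'Q) haC haC'
      rw [τ.eq_of_mem_parts hQ hP hC'Q hCP])
    (by
      simp only [mem_image, not_exists, not_and]
      intro P hP hPe
      obtain ⟨C, hC⟩ := τ.nonempty_of_mem_parts hP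
      obtain ⟨c, hc⟩ := σ.nonempty_of_mem_parts (τ.le hP hC)
      have hcP : c ∈ P.sup id := mem_sup.2 ⟨C, hC, hc⟩
      rw [hPe] at hcP
      exact notMem_empty c hcP)

def partsPartition {σ π : Finpartition s} (h : σ ≤ π) : Finpartition σ.parts :=
  ofExistsUnique (π.parts.image fun B => {C ∈ σ.parts | C ⊆ B})
    (by
      simp only [mem_image]
      rintro _ ⟨B, -, rfl⟩
      exact filter_subset _ _)
    (by
      intro C hC
      obtain ⟨B, hB, hCB⟩ := h hC
      refine ⟨_, ⟨mem_image_of_mem _ hB, mem_filter.2 ⟨hC, hCB⟩⟩, ?_⟩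
      rintro _ ⟨hB'im, hCB'⟩
      obtain ⟨B', hB', rfl⟩ := mem_image.1 hB'im
      obtain ⟨c, hc⟩ := σ.nonempty_of_mem_parts hC
      rw [π.eq_of_mem_parts hB' hB ((mem_filter.1 hCB').2 hc) (hCB hc)])
    (by
      simp only [mem_image, not_exists, not_and]
      intro B hB hBe
      obtain ⟨b, hb⟩ := π.nonempty_of_mem_parts hB
      obtain ⟨C, hC, hbC⟩ := σ.exists_mem (π.le hB hb)
      obtain ⟨B', hB', hCB'⟩ := h hC
      obtain rfl := π.eq_of_mem_parts hB hB' hb (hCB' hbC)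
      have hCB : C ∈ {C ∈ σ.parts | C ⊆ B} := mem_filter.2 ⟨hC, hCB'⟩
      rw [hBe] at hCB
      exact notMem_empty C hCB)

lemma sup_filter_subset_of_le {σ π : Finpartition s} (h : σ ≤ π) {B : Finset α}
    (hB : B ∈ π.parts) : {C ∈ σ.parts | C ⊆ B}.sup id = B := by
  refine le_antisymm (Finset.sup_le fun C hC => (mem_filter.1 hC).2) fun b hb => ?_
  obtain ⟨C, hC, hbC⟩ := σ.exists_mem (π.le hB hb)
  obtain ⟨B', hB', hCB'⟩ := h hC
  obtain rfl := π.eq_of_mem_parts hB hB' hb (hCB' hbC)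
  exact mem_sup.2 ⟨C, mem_filter.2 ⟨hC, hCB'⟩, hbC⟩

lemma filter_subset_sup_eq (σ : Finpartition s) (τ : Finpartition σ.parts)
    {P : Finset (Finset α)} (hP : P ∈ τ.parts) : {C ∈ σ.parts | C ⊆ P.sup id} = P := by
  ext C
  rw [mem_filter]
  refine ⟨fun ⟨hC, hCP⟩ => ?_, fun hCP => ⟨τ.le hP hCP, le_sup (f := id) hCP⟩⟩
  obtain ⟨c, hc⟩ := σ.nonempty_of_mem_parts hC
  obtain ⟨C', hC'P, hcC'⟩ := mem_sup.1 (hCP hc)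
  rwa [σ.eq_of_mem_parts hC (τ.le hP hC'P) hc hcC']

lemma le_glue (σ : Finpartition s) (τ : Finpartition σ.parts) : σ ≤ σ.glue τ := by
  intro C hC
  obtain ⟨P, hP, hCP⟩ := τ.exists_mem hC
  exact ⟨P.sup id, mem_image_of_mem _ hP, le_sup (f := id) hCP⟩

def coarseningEquiv (σ : Finpartition s) :
    {π : Finpartition s // σ ≤ π} ≃ Finpartition σ.parts where
  toFun π := partsPartition π.2
  invFun τ := ⟨σ.glue τ, le_glue σ τ⟩
  left_inv := by
    rintro ⟨π, h⟩
    ext1; ext1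
    simp only [glue, partsPartition, ofExistsUnique_parts, image_image, Function.comp_def]
    rw [image_congr fun B hB => sup_filter_subset_of_le h hB, image_id']
  right_inv τ := by
    ext1
    simp only [glue, partsPartition, ofExistsUnique_parts, image_image, Function.comp_def]
    rw [image_congr fun P hP => filter_subset_sup_eq σ τ hP, image_id']

lemma prod_parts_partsPartition {M : Type*} [CommMonoid M] {σ π : Finpartition s} (h : σ ≤ π)
    (f : Finset (Finset α) → M) :
    ∏ P ∈ (partsPartition h).parts, f P = ∏ B ∈ π.parts, f {C ∈ σ.parts | C ⊆ B} := by
  refine prod_image fun B hB B' hB' hBB' => ?_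
  rw [← sup_filter_subset_of_le h hB, ← sup_filter_subset_of_le h hB']
  exact congrArg (Finset.sup · id) hBB'

open scoped Classical in
lemma sum_coarsenings_prod_restrict {R : Type*} [CommSemiring R] (σ : Finpartition s)
    (f : Finset (Finset α) → R) :
    ∑ π ∈ univ.filter (σ ≤ ·), ∏ B : π.parts, f (σ.restrict (π.le B.2)).parts
      = ∑ τ : Finpartition σ.parts, ∏ P ∈ τ.parts, f P := by
  rw [sum_subtype (p := (σ ≤ ·)) _ (by simp), ← (coarseningEquiv σ).sum_comp]
  refine Fintype.sum_congr _ _ fun ⟨π, h⟩ => ?_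
  simp only [parts_restrict_of_le h (Subtype.prop _)]
  rw [prod_coe_sort π.parts (fun B => f {C ∈ σ.parts | C ⊆ B})]
  exact (prod_parts_partsPartition h f).symm

lemma parts_avoid_of_mem {β : Type*} [GeneralizedBooleanAlgebra β] [DecidableEq β] {a b : β}
    (P : Finpartition a) (hb : b ∈ P.parts) : (P.avoid b).parts = P.parts.erase b := by
  ext c
  rw [mem_avoid, mem_erase]
  constructor
  · rintro ⟨d, hd, hdb, rfl⟩
    have hne : d ≠ b := fun h => hdb h.le
    have hdb' : Disjoint d b := P.disjoint hd hb hne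
    rw [hdb'.sdiff_eq_left]
    exact ⟨hne, hd⟩
  · rintro ⟨hne, hc⟩
    have hcb : Disjoint c b := P.disjoint hc hb hne
    exact ⟨c, hc, fun hle => P.ne_bot hc (hcb.eq_bot_of_le hle), hcb.sdiff_eq_left⟩

lemma sum_prod_parts_eq_sum_mul {R : Type*} [CommSemiring R] {a : α} (ha : a ∈ s)
    (f : Finset α → R) :
    ∑ τ : Finpartition s, ∏ P ∈ τ.parts, f P
      = ∑ B ∈ s.powerset with a ∈ B, f B * ∑ τ : Finpartition (s \ B), ∏ P ∈ τ.parts, f P := by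
  have part_mem_powerset (τ : Finpartition s) (_ : τ ∈ univ) :
      τ.part a ∈ {B ∈ s.powerset | a ∈ B} :=
    mem_filter.2 ⟨mem_powerset.2 (τ.part_subset a), τ.mem_part_self.2 ha⟩
  rw [← sum_fiberwise_of_maps_to part_mem_powerset]
  refine sum_congr rfl fun B hB => ?_
  obtain ⟨hBs, haB⟩ := mem_filter.1 hB
  have hB_ne : B ≠ ⊥ := ne_empty_of_mem haB
  have hB_notMem (τ : Finpartition (s \ B)) : B ∉ τ.parts :=
    fun h => (mem_sdiff.1 (τ.le h haB)).2 haB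
  rw [mul_sum]
  refine sum_nbij' (fun τ => τ.avoid B)
    (fun τ => τ.extend hB_ne sdiff_disjoint (sdiff_union_of_subset (mem_powerset.1 hBs)))
    (fun _ _ => mem_univ _) (fun τ _ => ?_) (fun τ hτ => ?_) (fun τ _ => ?_) (fun τ hτ => ?_)
  · exact mem_filter.2 ⟨mem_univ _, part_eq_of_mem _ (mem_insert_self _ _) haB⟩
  · have hτB : B ∈ τ.parts := (mem_filter.1 hτ).2 ▸ τ.part_mem.2 ha
    ext1
    rw [extend_parts, parts_avoid_of_mem τ hτB, insert_erase hτB]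
  · ext1
    rw [parts_avoid_of_mem _ (by simp [extend_parts]), extend_parts, erase_insert (hB_notMem τ)]
  · have hτB : B ∈ τ.parts := (mem_filter.1 hτ).2 ▸ τ.part_mem.2 ha
    rw [parts_avoid_of_mem τ hτB, mul_prod_erase _ _ hτB]

lemma parts_eq_singleton_of_card_le_one (hs : s.Nonempty) {σ : Finpartition s}
    (h : #σ.parts ≤ 1) : σ.parts = {s} := by
  obtain ⟨B, hB⟩ := card_eq_one.1 (le_antisymm h (card_pos.2 (σ.parts_nonempty hs.ne_empty)))
  have hsup := σ.sup_parts
  rw [hB, sup_singleton, id] at hsup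
  rw [hB, hsup]

end Finpartition

lemma Finset.sum_powerset_filter_mem_sdiff {α M : Type*} [DecidableEq α] [AddCommMonoid M]
    {S : Finset α} {a : α} (ha : a ∈ S) (f : Finset α → M) :
    ∑ B ∈ S.powerset with a ∈ B, f (S \ B) = ∑ D ∈ (S.erase a).powerset, f D := by
  refine sum_nbij' (S \ ·) (S \ ·) ?_ ?_ ?_ ?_ fun _ _ => rfl
  all_goals intro B hB
  all_goals simp only [mem_filter, mem_powerset, subset_erase] at hB ⊢
  · exact ⟨sdiff_subset, fun h => (mem_sdiff.1 h).2 hB.2⟩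
  · exact ⟨sdiff_subset, mem_sdiff.2 ⟨ha, hB.2⟩⟩
  all_goals exact Finset.sdiff_sdiff_eq_self hB.1

/-- The Möbius function `μ(0̂, 1̂)` of the lattice of partitions of an `m`-element set. -/
def partitionMoebius (K : Type*) [CommRing K] (m : ℕ) : K := (-1) ^ (m - 1) * (m - 1).factorial

section Moebius

variable {K : Type*} [CommRing K]

lemma partitionMoebius_succ_add_mul (m : ℕ) :
    partitionMoebius K (m + 1) + m * partitionMoebius K m = if m = 0 then 1 else 0 := by
  cases m with
  | zero => simp [partitionMoebius]
  | succ m =>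
    simp only [partitionMoebius, Nat.add_sub_cancel, Nat.factorial_succ, pow_succ]
    push_cast
    ring

lemma sum_powerset_partitionMoebius {α : Type*} (U : Finset α) :
    ∑ D ∈ U.powerset, (if #D ≤ 1 then partitionMoebius K (#U + 1 - #D) else 0)
      = if #U = 0 then 1 else 0 := by
  rw [sum_powerset_apply_card (fun k => if k ≤ 1 then partitionMoebius K (#U + 1 - k) else 0),
    sum_eq_add 0 1 zero_ne_one]
  · simp [← partitionMoebius_succ_add_mul]
  · intro k _ hk
    simp [show ¬ k ≤ 1 by omega]
  · simp
  · intro h1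
    simp [show #U = 0 by simpa using h1]

theorem sum_prod_partitionMoebius {α : Type*} [DecidableEq α] (S : Finset α) :
    ∑ τ : Finpartition S, ∏ P ∈ τ.parts, partitionMoebius K #P = if #S ≤ 1 then 1 else 0 := by
  induction S using Finset.strongInduction with
  | _ S ih =>
  obtain rfl | ⟨a, ha⟩ := S.eq_empty_or_nonempty
  · have : Unique (Finpartition (∅ : Finset α)) := inferInstanceAs (Unique (Finpartition ⊥))
    rw [Fintype.sum_unique, Finpartition.parts_eq_empty_iff.2 bot_eq_empty, prod_empty, card_empty,
      if_pos zero_le_one]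
  have hcompl : ∀ B ∈ {B ∈ S.powerset | a ∈ B}, partitionMoebius K #B *
      ∑ τ : Finpartition (S \ B), ∏ P ∈ τ.parts, partitionMoebius K #P
        = if #(S \ B) ≤ 1 then partitionMoebius K (#S - #(S \ B)) else 0 := by
    intro B hB
    obtain ⟨hBS, haB⟩ := mem_filter.1 hB
    rw [mem_powerset] at hBS
    rw [ih _ (sdiff_ssubset hBS ⟨a, haB⟩), mul_ite, mul_one, mul_zero, card_sdiff_of_subset hBS,
      Nat.sub_sub_self (card_le_card hBS)]
  rw [Finpartition.sum_prod_parts_eq_sum_mul ha, sum_congr rfl hcompl,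
    sum_powerset_filter_mem_sdiff ha (fun D => if #D ≤ 1 then partitionMoebius K (#S - #D) else 0),
    ← card_erase_add_one ha, sum_powerset_partitionMoebius]
  simp

variable {α : Type*} [DecidableEq α]

def cumulant (x : Finset α → K) (J : Finset α) : K :=
  ∑ σ : Finpartition J, partitionMoebius K #σ.parts * ∏ B ∈ σ.parts, x B

open scoped Classical in
lemma prod_cumulant_eq_sum_refinements (x : Finset α → K) {s : Finset α} (π : Finpartition s) :
    ∏ B ∈ π.parts, cumulant x B = ∑ σ ∈ univ.filter (· ≤ π),
      (∏ B : π.parts, partitionMoebius K #(σ.restrict (π.le B.2)).parts) * ∏ C ∈ σ.parts, x C := by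
  rw [← prod_coe_sort]
  simp only [cumulant]
  rw [← Finpartition.sum_refinements_prod_restrict]
  refine sum_congr rfl fun σ hσ => ?_
  rw [prod_mul_distrib, Finpartition.prod_prod_restrict_of_le (mem_filter.1 hσ).2]

open scoped Classical in
theorem sum_prod_cumulant (x : Finset α → K) {J : Finset α} (hJ : J.Nonempty) :
    ∑ π : Finpartition J, ∏ B ∈ π.parts, cumulant x B = x J := by
  calc ∑ π : Finpartition J, ∏ B ∈ π.parts, cumulant x B
      = ∑ σ : Finpartition J, (∑ π ∈ univ.filter (σ ≤ ·),
          ∏ B : π.parts, partitionMoebius K #(σ.restrict (π.le B.2)).parts)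
            * ∏ C ∈ σ.parts, x C := by
        simp only [prod_cumulant_eq_sum_refinements, sum_mul]
        exact sum_comm' fun _ _ => by simp only [mem_filter, mem_univ, true_and, and_true]
    _ = ∑ σ : Finpartition J, (if #σ.parts ≤ 1 then 1 else 0) * ∏ C ∈ σ.parts, x C := by
        refine sum_congr rfl fun σ _ => ?_
        rw [Finpartition.sum_coarsenings_prod_restrict σ (fun P => partitionMoebius K #P),
          sum_prod_partitionMoebius]
    _ = x J := by
        have hJ' : J ≠ ⊥ := hJ.ne_empty
        rw [Fintype.sum_eq_single (Finpartition.indiscrete hJ')]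
        · simp [Finpartition.indiscrete]
        · intro σ hσ
          rw [if_neg fun h => hσ (Finpartition.ext ?_), zero_mul]
          exact Finpartition.parts_eq_singleton_of_card_le_one hJ h

end Moebius

open scoped Classical in
theorem cumulant_partial_inversion_general {K : Type*} [CommRing K] {n : ℕ}
    (x y : Finset (Fin n) → K)
    (hy : ∀ J : Finset (Fin n), y J = ∑ σ : Finpartition J,
      (-1 : K) ^ (σ.parts.card - 1) * (σ.parts.card - 1).factorial * ∏ B ∈ σ.parts, x B) :
    ∀ (I : Finset (Fin n)) (ν : Finpartition I),
      ∏ B ∈ ν.parts, x B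
        = ∑ π ∈ Finset.univ.filter (fun π : Finpartition I => π ≤ ν),
            ∏ B ∈ π.parts, y B := by
  obtain rfl : y = cumulant x := funext hy
  intro I ν
  calc ∏ B ∈ ν.parts, x B
      = ∏ B : ν.parts, ∑ σ : Finpartition (B : Finset (Fin n)), ∏ C ∈ σ.parts, cumulant x C := by
        rw [← prod_coe_sort]
        exact prod_congr rfl fun B _ => (sum_prod_cumulant x (ν.nonempty_of_mem_parts B.2)).symm
    _ = ∑ π ∈ univ.filter (· ≤ ν), ∏ B : ν.parts,
          ∏ C ∈ (π.restrict (ν.le B.2)).parts, cumulant x C :=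
        (Finpartition.sum_refinements_prod_restrict ν _).symm
    _ = ∑ π ∈ univ.filter (· ≤ ν), ∏ B ∈ π.parts, cumulant x B :=
        sum_congr rfl fun π hπ => Finpartition.prod_prod_restrict_of_le (mem_filter.1 hπ).2 _

open scoped Classical in
/-- Let `K` be a commutative ring, `n ≥ 1`, and `x : Finset (Fin n) → K`
with `x ∅ = 1`.  For `J ⊆ [n]` define
`y(J) = ∑_{σ ∈ Π(J)} (−1)^{|σ|−1}·(|σ|−1)!·∏_{B∈σ} x(B)`.  Then for every `I ⊆ [n]` and
every set partition `ν` of `I`,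
`∏_{B∈ν} x(B) = ∑_{π ∈ Π(I), π ≤ ν} ∏_{B∈π} y(B)`, where `π ≤ ν` is refinement. -/
theorem cumulant_partial_inversion {K : Type*} [CommRing K] {n : ℕ} (hn : 1 ≤ n)
    (x y : Finset (Fin n) → K) (hx0 : x ∅ = 1)
    (hy : ∀ J : Finset (Fin n), y J = ∑ σ : Finpartition J,
      (-1 : K) ^ (σ.parts.card - 1) * (σ.parts.card - 1).factorial * ∏ B ∈ σ.parts, x B) :
    ∀ (I : Finset (Fin n)) (ν : Finpartition I),
      ∏ B ∈ ν.parts, x B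
        = ∑ π ∈ Finset.univ.filter (fun π : Finpartition I => π ≤ ν),
            ∏ B ∈ π.parts, y B :=
  cumulant_partial_inversion_general x y hy
end

section
/- Let R be a commutative ring and t₁, t₂, t₃, s₁, s₂, s₃ ∈ R. Set x₁ = t₁+s₁, x₂ = t₂+s₂, x₃ = t₃+s₃, x₄ = −s₁s₂, x₅ = −s₁s₃, x₆ = −s₂s₃, and x₇ = −(s₁s₂t₃ + s₁s₃t₂ + s₂s₃t₁ + s₁s₂s₃). Then x₃²x₄² + x₂²x₅² + x₁²x₆² + 2(x₁x₂x₅x₆ + x₁x₃x₄x₆ + x₂x₃x₄x₅) + 4x₄x₅x₆ − 2x₇(x₁x₆ + x₃x₄ + x₂x₅) + x₇² = 0. -/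
/-- Let `R` be a commutative ring and `t₁,t₂,t₃,s₁,s₂,s₃ ∈ R`.  With
`x₁ = t₁+s₁`, `x₂ = t₂+s₂`, `x₃ = t₃+s₃`, `x₄ = −s₁s₂`, `x₅ = −s₁s₃`, `x₆ = −s₂s₃` and
`x₇ = −(s₁s₂t₃ + s₁s₃t₂ + s₂s₃t₁ + s₁s₂s₃)` (the image under the linearizing Cremona of
the tangential parametrization of `Σ₃`), one has
`x₃²x₄² + x₂²x₅² + x₁²x₆² + 2(x₁x₂x₅x₆ + x₁x₃x₄x₆ + x₂x₃x₄x₅) + 4x₄x₅x₆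
  − 2x₇(x₁x₆ + x₃x₄ + x₂x₅) + x₇² = 0`. -/
theorem tangential_segre3_quartic {R : Type*} [CommRing R]
    (t1 t2 t3 s1 s2 s3 x1 x2 x3 x4 x5 x6 x7 : R)
    (h1 : x1 = t1 + s1) (h2 : x2 = t2 + s2) (h3 : x3 = t3 + s3)
    (h4 : x4 = -(s1 * s2)) (h5 : x5 = -(s1 * s3)) (h6 : x6 = -(s2 * s3))
    (h7 : x7 = -(s1 * s2 * t3 + s1 * s3 * t2 + s2 * s3 * t1 + s1 * s2 * s3)) :
    x3 ^ 2 * x4 ^ 2 + x2 ^ 2 * x5 ^ 2 + x1 ^ 2 * x6 ^ 2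
      + 2 * (x1 * x2 * x5 * x6 + x1 * x3 * x4 * x6 + x2 * x3 * x4 * x5)
      + 4 * x4 * x5 * x6
      - 2 * x7 * (x1 * x6 + x3 * x4 + x2 * x5) + x7 ^ 2 = 0 := by
  subst h1 h2 h3 h4 h5 h6 h7; ring
end

section
/- Let R be a commutative ring and t₁, t₂, t₃, s₁, s₂, s₃ ∈ R. Set x_i = t_i + s_i for i = 1,2,3, x_{ij} = t_it_j + s_it_j + s_jt_i for 1 ≤ i < j ≤ 3, and x₁₂₃ = t₁t₂t₃ + s₁t₂t₃ + s₂t₁t₃ + s₃t₁t₂. Define the cumulant coordinates y_{ij} = x_{ij} − x_i x_j and y₁₂₃ = x₁₂₃ − x₁x₂₃ − x₂x₁₃ − x₃x₁₂ + 2x₁x₂x₃. Then y₁₂₃² + 4·y₁₂·y₁₃·y₂₃ = 0. -/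
/-- Let `R` be a commutative ring and `t₁,t₂,t₃,s₁,s₂,s₃ ∈ R`.  With
`x_i = t_i + s_i`, `x_{ij} = t_it_j + s_it_j + s_jt_i`,
`x₁₂₃ = t₁t₂t₃ + s₁t₂t₃ + s₂t₁t₃ + s₃t₁t₂` (the affine tangential variety of `Σ₃`),
and cumulant coordinates `y_{ij} = x_{ij} − x_ix_j`,
`y₁₂₃ = x₁₂₃ − x₁x₂₃ − x₂x₁₃ − x₃x₁₂ + 2x₁x₂x₃`, one has
`y₁₂₃² + 4·y₁₂·y₁₃·y₂₃ = 0`. -/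
theorem tangential_segre3_cumulant_equation {R : Type*} [CommRing R]
    (t1 t2 t3 s1 s2 s3 x1 x2 x3 x12 x13 x23 x123 y12 y13 y23 y123 : R)
    (hx1 : x1 = t1 + s1) (hx2 : x2 = t2 + s2) (hx3 : x3 = t3 + s3)
    (hx12 : x12 = t1 * t2 + s1 * t2 + s2 * t1)
    (hx13 : x13 = t1 * t3 + s1 * t3 + s3 * t1)
    (hx23 : x23 = t2 * t3 + s2 * t3 + s3 * t2)
    (hx123 : x123 = t1 * t2 * t3 + s1 * t2 * t3 + s2 * t1 * t3 + s3 * t1 * t2)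
    (hy12 : y12 = x12 - x1 * x2) (hy13 : y13 = x13 - x1 * x3) (hy23 : y23 = x23 - x2 * x3)
    (hy123 : y123 = x123 - x1 * x23 - x2 * x13 - x3 * x12 + 2 * x1 * x2 * x3) :
    y123 ^ 2 + 4 * y12 * y13 * y23 = 0 := by
  subst hx1 hx2 hx3 hx12 hx13 hx23 hx123 hy12 hy13 hy23 hy123; ring
end

section
/- Let K be a commutative ring, n ≥ 1, a, b : Fin n → K and s ∈ K. For I ⊆ {1,…,n} set x(I) = (1−s)·∏_{i∈I} a_i + s·∏_{i∈I} b_i (so x(∅) = 1). Define y(I) = ∑_{A ⊆ I} (−1)^{|I∖A|} · x(A) · ∏_{i∈I∖A} x({i}), and z(I) = ∑_{π} (−1)^{|π|−1} ∏_{B∈π} y(B), where the sum runs over all interval partitions π of I, i.e. set partitions of I each of whose blocks B is order-convex in I (for all i < j < k in I, if i ∈ B and k ∈ B then j ∈ B). Then for every I with |I| ≥ 2, z(I) = s·(1−s)·(1−2s)^{|I|−2} · ∏_{i∈I} (b_i − a_i). -/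
/-!
Substituting the secant parametrization into the one-cluster sum and expanding the products
over `A ⊆ J` gives `y(J) = c_{|J|} · ∏_{i ∈ J} (b_i - a_i)` with
`c_k = (1 - s)(-s)^k + s(1 - s)^k`. The factors `∏_{i ∈ B} (b_i - a_i)` multiply to
`∏_{i ∈ I} (b_i - a_i)` over any partition of `I`, so `z(I)` is that product times a sum over
interval partitions of `I` of weights depending only on the block sizes. Splitting off the last
block `{x ∈ I | t ≤ x}` shows that this sum depends only on `|I|` and satisfies a convolution
recursion, whose solution is read off from the generating function of the `c_k`.
-/

open Finset

namespace Finpartition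

variable {α : Type*} [DecidableEq α]

theorem prod_parts_prod {M : Type*} [CommMonoid M] {I : Finset α} (P : Finpartition I)
    (f : α → M) : ∏ B ∈ P.parts, ∏ i ∈ B, f i = ∏ i ∈ I, f i := by
  have h := prod_biUnion (t := id) (f := f) P.supIndep.pairwiseDisjoint
  rw [P.biUnion_parts] at h
  exact h.symm

theorem sup_erase_eq_sdiff {I : Finset α} (P : Finpartition I) {L : Finset α}
    (hL : L ∈ P.parts) : (P.parts.erase L).sup id = I \ L := by
  have hdisj : Disjoint L ((P.parts.erase L).sup id) :=
    P.supIndep (erase_subset L P.parts) hL (notMem_erase L P.parts)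
  have hI := P.sup_parts
  rw [← insert_erase hL, sup_insert, id] at hI
  exact hdisj.sup_sdiff_cancel_left.symm.trans (congrArg (· \ L) hI)

end Finpartition

section IntervalPartition

variable {α : Type*} [LinearOrder α] [DecidableEq α]

theorem Finset.sum_card_filter_le_card_filter_lt {M : Type*} [AddCommMonoid M]
    (I : Finset α) (f : ℕ → ℕ → M) :
    ∑ t ∈ I, f #{x ∈ I | t ≤ x} #{x ∈ I | x < t} = ∑ k ∈ range #I, f (#I - k) k := by
  induction I using Finset.induction_on_max generalizing f with
  | empty => simp
  | insert M I hlt ih =>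
    have hM : M ∉ I := fun h => (hlt M h).false
    have hle : ∀ t ∈ I, {x ∈ insert M I | t ≤ x} = insert M {x ∈ I | t ≤ x} := fun t ht => by
      rw [filter_insert, if_pos (hlt t ht).le]
    have hlt' : ∀ t ∈ I, {x ∈ insert M I | x < t} = {x ∈ I | x < t} := fun t ht => by
      rw [filter_insert, if_neg (hlt t ht).not_gt]
    have htop : {x ∈ insert M I | M ≤ x} = {M} := by
      ext x
      simp only [mem_filter, mem_insert, mem_singleton]
      constructor
      · rintro ⟨rfl | hx, hMx⟩
        · rfl
        · exact absurd hMx (hlt x hx).not_ge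
      · rintro rfl
        exact ⟨Or.inl rfl, le_rfl⟩
    have hbot : {x ∈ insert M I | x < M} = I := by
      rw [filter_insert, if_neg (lt_irrefl M), filter_true_of_mem hlt]
    rw [sum_insert hM, htop, hbot, card_insert_of_notMem hM, sum_range_succ,
      sum_congr rfl fun t ht => by rw [hle t ht, hlt' t ht, card_insert_of_notMem (by simp [hM])],
      ih fun a b => f (a + 1) b, card_singleton, Nat.add_sub_cancel_left, add_comm]
    exact congrArg₂ _ (sum_congr rfl fun k hk => by rw [Nat.sub_add_comm (mem_range.1 hk).le]) rfl

namespace Finpartition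

def IsInterval {I : Finset α} (P : Finpartition I) : Prop :=
  ∀ B ∈ P.parts, ∀ i ∈ B, ∀ k ∈ B, ∀ j ∈ I, i < j → j < k → j ∈ B

instance {I : Finset α} : DecidablePred (IsInterval (I := I)) := fun P =>
  inferInstanceAs (Decidable (∀ B ∈ P.parts, ∀ i ∈ B, ∀ k ∈ B, ∀ j ∈ I, i < j → j < k → j ∈ B))

theorem IsInterval.existsUnique_filter_le_mem_parts {I : Finset α} {P : Finpartition I}
    (hP : P.IsInterval) (hI : I.Nonempty) : ∃! t, t ∈ I ∧ {x ∈ I | t ≤ x} ∈ P.parts := by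
  have hM := I.max'_mem hI
  obtain ⟨L, hL, hML⟩ := P.exists_mem hM
  have hLne : L.Nonempty := ⟨_, hML⟩
  have hmin := L.min'_mem hLne
  have hLeq : {x ∈ I | L.min' hLne ≤ x} = L := by
    ext x
    simp only [mem_filter]
    refine ⟨fun ⟨hx, hmx⟩ => ?_, fun hx => ⟨P.le hL hx, L.min'_le x hx⟩⟩
    rcases hmx.lt_or_eq with hmx | rfl
    · rcases (I.le_max' x hx).lt_or_eq with hxM | hxM
      · exact hP L hL _ hmin _ hML x hx hmx hxM
      · exact hxM ▸ hML
    · exact hmin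
  refine ⟨L.min' hLne, ⟨P.le hL hmin, by rwa [hLeq]⟩, fun t ⟨ht, htP⟩ => ?_⟩
  have htL : {x ∈ I | t ≤ x} = L :=
    P.eq_of_mem_parts htP hL (mem_filter.2 ⟨hM, I.le_max' t ht⟩) hML
  exact le_antisymm (mem_filter.1 (htL.ge hmin)).2
    (L.min'_le t (htL.le (mem_filter.2 ⟨ht, le_rfl⟩)))

variable {R : Type*} [CommSemiring R]

theorem sum_prod_isInterval_of_filter_le_mem_parts (w : Finset α → R) {I : Finset α} {t : α}
    (ht : t ∈ I) :
    ∑ P : Finpartition I with P.IsInterval ∧ {x ∈ I | t ≤ x} ∈ P.parts, ∏ B ∈ P.parts, w B =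
      w {x ∈ I | t ≤ x} *
        ∑ Q : Finpartition {x ∈ I | x < t} with Q.IsInterval, ∏ B ∈ Q.parts, w B := by
  set L := {x ∈ I | t ≤ x}
  set J := {x ∈ I | x < t}
  have htL : t ∈ L := mem_filter.2 ⟨ht, le_rfl⟩
  have hJL : Disjoint J L := disjoint_filter.2 fun x _ hx hx' => hx'.not_gt hx
  have hJL' : J ⊔ L = I := by
    ext x
    simp only [J, L, sup_eq_union, mem_union, mem_filter]
    have := lt_or_ge x t
    tauto
  have hIL : I \ L = J := by
    ext x
    simp only [J, L, mem_sdiff, mem_filter, not_and, not_le]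
    tauto
  have hLQ (Q : Finpartition J) : L ∉ Q.parts := fun hL =>
    lt_irrefl t (mem_filter.1 (Q.le hL htL)).2
  rw [mul_sum]
  refine (sum_bij' (fun Q _ => Q.extend (ne_empty_of_mem htL) hJL hJL')
    (fun P hP => P.ofSubset (erase_subset L P.parts)
      (hIL ▸ P.sup_erase_eq_sdiff (mem_filter.1 hP).2.2)) ?_ ?_ ?_ ?_ ?_).symm
  · intro Q hQ
    simp only [mem_filter, mem_univ, true_and, extend_parts, mem_insert_self, and_true] at hQ ⊢
    intro B hB i hi k hk j hj hij hjk
    rcases mem_insert.1 hB with rfl | hB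
    · exact mem_filter.2 ⟨hj, (mem_filter.1 hi).2.trans hij.le⟩
    · exact hQ B hB i hi k hk j
        (mem_filter.2 ⟨hj, hjk.trans (mem_filter.1 (Q.le hB hk)).2⟩) hij hjk
  · intro P hP
    simp only [mem_filter, mem_univ, true_and] at hP ⊢
    exact fun B hB i hi k hk j hj => hP.1 B (mem_of_mem_erase hB) i hi k hk j (mem_filter.1 hj).1
  · intro Q _
    ext1
    exact erase_insert (hLQ Q)
  · intro P hP
    ext1
    exact insert_erase (mem_filter.1 hP).2.2
  · intro Q _
    rw [extend_parts, prod_insert (hLQ Q)]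

theorem sum_prod_isInterval_eq_sum_filter_le (w : Finset α → R) {I : Finset α}
    (hI : I.Nonempty) :
    ∑ P : Finpartition I with P.IsInterval, ∏ B ∈ P.parts, w B =
      ∑ t ∈ I, w {x ∈ I | t ≤ x} *
        ∑ Q : Finpartition {x ∈ I | x < t} with Q.IsInterval, ∏ B ∈ Q.parts, w B := by
  rw [← sum_congr rfl fun t ht => sum_prod_isInterval_of_filter_le_mem_parts w ht,
    sum_comm' (t' := {P : Finpartition I | P.IsInterval})
      (s' := fun P => {t ∈ I | {x ∈ I | t ≤ x} ∈ P.parts}) (by simp only [mem_filter, mem_univ, true_and]; tauto)]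
  refine sum_congr rfl fun P hP => ?_
  have hcard : #{t ∈ I | {x ∈ I | t ≤ x} ∈ P.parts} = 1 :=
    card_eq_one_iff_existsUnique.2 <| by
      simpa only [mem_filter] using (mem_filter.1 hP).2.existsUnique_filter_le_mem_parts hI
  rw [sum_const, hcard, one_smul]

theorem sum_prod_card_isInterval (c g : ℕ → R) (hg₀ : g 0 = 1)
    (hg : ∀ m, g (m + 1) = ∑ k ∈ range (m + 1), g k * c (m + 1 - k)) (I : Finset α) :
    ∑ P : Finpartition I with P.IsInterval, ∏ B ∈ P.parts, c #B = g #I := by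
  induction I using Finset.strongInduction with
  | H I ih =>
  rcases I.eq_empty_or_nonempty with rfl | hI
  · have hparts (P : Finpartition (∅ : Finset α)) : P.parts = ∅ := P.parts_eq_empty_iff.2 rfl
    have hcard : Fintype.card (Finpartition (∅ : Finset α)) = 1 :=
      Fintype.card_eq_one_iff.2 ⟨⊥, fun P => Finpartition.ext (by rw [hparts, hparts])⟩
    simp [IsInterval, hparts, hcard, hg₀]
  · obtain ⟨m, hm⟩ : ∃ m, #I = m + 1 := Nat.exists_eq_add_one.2 hI.card_pos
    have hlt (t : α) (ht : t ∈ I) : {x ∈ I | x < t} ⊂ I :=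
      filter_ssubset.2 ⟨t, ht, lt_irrefl t⟩
    rw [sum_prod_isInterval_eq_sum_filter_le _ hI,
      sum_congr rfl fun t ht => by rw [ih _ (hlt t ht), mul_comm],
      sum_card_filter_le_card_filter_lt I fun a b => g b * c a, hm, hg]

end Finpartition

end IntervalPartition

section Coefficients

variable {K : Type*} [CommRing K]

def oneClusterCoeff (s : K) (k : ℕ) : K := (1 - s) * (-s) ^ k + s * (1 - s) ^ k

/-- `∑ₖ oneClusterCoeff s k · tᵏ = (1 - (1 - 2s) t) / ((1 + s t)(1 - (1 - s) t))`, whose inverse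
is `∑ₖ toricCoeff s k · tᵏ = 1 - s (1 - s) t² / (1 - (1 - 2s) t)`. -/
def toricCoeff (s : K) : ℕ → K
  | 0 => 1
  | 1 => 0
  | m + 2 => -(s * (1 - s) * (1 - 2 * s) ^ m)

@[simp] lemma oneClusterCoeff_zero (s : K) : oneClusterCoeff s 0 = 1 := by
  simp [oneClusterCoeff]

@[simp] lemma oneClusterCoeff_one (s : K) : oneClusterCoeff s 1 = 0 := by
  simp only [oneClusterCoeff, pow_one, mul_neg]
  ring

lemma oneClusterCoeff_add_two (s : K) (k : ℕ) :
    oneClusterCoeff s (k + 2) =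
      (1 - 2 * s) * oneClusterCoeff s (k + 1) + s * (1 - s) * oneClusterCoeff s k := by
  simp only [oneClusterCoeff, pow_succ]
  ring

@[simp] lemma toricCoeff_zero (s : K) : toricCoeff s 0 = 1 := rfl

@[simp] lemma toricCoeff_one (s : K) : toricCoeff s 1 = 0 := rfl

lemma toricCoeff_add_three (s : K) (m : ℕ) :
    toricCoeff s (m + 3) = (1 - 2 * s) * toricCoeff s (m + 2) := by
  simp only [toricCoeff, pow_succ]
  ring

lemma sum_antidiagonal_toricCoeff_mul_oneClusterCoeff (s : K) (m : ℕ) :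
    ∑ p ∈ antidiagonal (m + 1), toricCoeff s p.1 * oneClusterCoeff s p.2 = 0 := by
  set D : ℕ → K := fun m => ∑ p ∈ antidiagonal m, toricCoeff s p.1 * oneClusterCoeff s p.2
  have hD (m : ℕ) : D (m + 2) = toricCoeff s (m + 2) - (1 - 2 * s) * toricCoeff s (m + 1)
      + (1 - 2 * s) * D (m + 1) + s * (1 - s) * D m := by
    simp only [D, Nat.sum_antidiagonal_succ', zero_add, oneClusterCoeff_zero, oneClusterCoeff_one,
      oneClusterCoeff_add_two, mul_add, sum_add_distrib, mul_left_comm _ (1 - 2 * s),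
      mul_left_comm _ (s * (1 - s)), ← mul_sum]
    ring
  change D (m + 1) = 0
  induction m using Nat.twoStepInduction with
  | zero => simp [D, Nat.sum_antidiagonal_succ']
  | one =>
    rw [hD]
    simp [D, Nat.sum_antidiagonal_succ', toricCoeff]
  | more m ih₁ ih₂ =>
    rw [hD, ih₁, ih₂, toricCoeff_add_three]
    ring

lemma toricCoeff_succ (s : K) (m : ℕ) :
    toricCoeff s (m + 1) =
      ∑ k ∈ range (m + 1), toricCoeff s k * -oneClusterCoeff s (m + 1 - k) := by
  have h := sum_antidiagonal_toricCoeff_mul_oneClusterCoeff s m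
  rw [Nat.sum_antidiagonal_eq_sum_range_succ (fun i j => toricCoeff s i * oneClusterCoeff s j),
    sum_range_succ, Nat.sub_self, oneClusterCoeff_zero, mul_one] at h
  simp only [mul_neg, sum_neg_distrib]
  linear_combination h

theorem sum_powerset_secant {ι : Type*} [DecidableEq ι] (a b : ι → K) (s : K)
    (J : Finset ι) :
    ∑ A ∈ J.powerset, (-1 : K) ^ #(J \ A) * ((1 - s) * ∏ i ∈ A, a i + s * ∏ i ∈ A, b i) *
        ∏ i ∈ J \ A, ((1 - s) * a i + s * b i) =
      oneClusterCoeff s #J * ∏ i ∈ J, (b i - a i) := by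
  set m : ι → K := fun i => (1 - s) * a i + s * b i
  have hterm : ∀ A ∈ J.powerset,
      (-1 : K) ^ #(J \ A) * ((1 - s) * ∏ i ∈ A, a i + s * ∏ i ∈ A, b i) * ∏ i ∈ J \ A, m i =
        (1 - s) * ((∏ i ∈ A, a i) * ∏ i ∈ J \ A, -m i) +
          s * ((∏ i ∈ A, b i) * ∏ i ∈ J \ A, -m i) := fun A _ => by
    rw [prod_neg]
    ring
  rw [sum_congr rfl hterm, sum_add_distrib, ← mul_sum, ← mul_sum, ← prod_add, ← prod_add,
    prod_congr rfl fun i _ => show a i + -m i = -s * (b i - a i) by ring,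
    prod_congr rfl fun i _ => show b i + -m i = (1 - s) * (b i - a i) by ring,
    prod_mul_distrib, prod_mul_distrib, prod_const, prod_const, oneClusterCoeff]
  ring

end Coefficients

open scoped Classical in
theorem secant_cumulants_toric_general {K : Type*} [CommRing K] {n : ℕ}
    (a b : Fin n → K) (s : K)
    (x y z : Finset (Fin n) → K)
    (hx : ∀ I : Finset (Fin n), x I = (1 - s) * ∏ i ∈ I, a i + s * ∏ i ∈ I, b i)
    (hy : ∀ I : Finset (Fin n), y I = ∑ A ∈ I.powerset,
      (-1 : K) ^ (I \ A).card * x A * ∏ i ∈ I \ A, x {i})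
    (hz : ∀ I : Finset (Fin n), z I = ∑ π ∈ Finset.univ.filter
        (fun π : Finpartition I => ∀ B ∈ π.parts,
          ∀ i ∈ B, ∀ k ∈ B, ∀ j ∈ I, i < j → j < k → j ∈ B),
      (-1 : K) ^ (π.parts.card - 1) * ∏ B ∈ π.parts, y B) :
    ∀ I : Finset (Fin n), 2 ≤ I.card →
      z I = s * (1 - s) * (1 - 2 * s) ^ (I.card - 2) * ∏ i ∈ I, (b i - a i) := by
  intro I hI
  have hy' (J : Finset (Fin n)) : y J = oneClusterCoeff s #J * ∏ i ∈ J, (b i - a i) := by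
    simp only [hy, hx, prod_singleton, sum_powerset_secant]
  have hterm (P : Finpartition I) : (-1 : K) ^ (#P.parts - 1) * ∏ B ∈ P.parts, y B =
      -(∏ i ∈ I, (b i - a i)) * ∏ B ∈ P.parts, -oneClusterCoeff s #B := by
    obtain ⟨p, hp⟩ : ∃ p, #P.parts = p + 1 :=
      Nat.exists_eq_add_one.2 (card_pos.2 (P.parts_nonempty (card_pos.1 (by omega)).ne_empty))
    simp only [hy', prod_mul_distrib, P.prod_parts_prod, prod_neg, hp, pow_succ,
      Nat.add_sub_cancel]
    ring
  obtain ⟨m, hm⟩ : ∃ m, #I = m + 2 := Nat.exists_eq_add_of_le' hI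
  calc z I = -(∏ i ∈ I, (b i - a i)) *
        ∑ P : Finpartition I with P.IsInterval, ∏ B ∈ P.parts, -oneClusterCoeff s #B := by
        rw [hz, sum_congr rfl fun P _ => hterm P, ← mul_sum]
        congr 2
        ext P
        simp only [mem_filter, mem_univ, true_and]
        rfl
    _ = -(∏ i ∈ I, (b i - a i)) * toricCoeff s #I := by
        rw [Finpartition.sum_prod_card_isInterval (-oneClusterCoeff s ·) _ rfl (toricCoeff_succ s)]
    _ = s * (1 - s) * (1 - 2 * s) ^ (#I - 2) * ∏ i ∈ I, (b i - a i) := by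
        rw [hm, Nat.add_sub_cancel, toricCoeff]
        ring

open scoped Classical in
/-- Let `K` be a commutative ring, `n ≥ 1`, `a, b : Fin n → K`, `s ∈ K`.
For `I ⊆ [n]` set `x(I) = (1−s)·∏_{i∈I} a_i + s·∏_{i∈I} b_i` (so `x(∅) = 1`), the
parametrization of the secant variety of `Σ_n`.  Define
`y(I) = ∑_{A ⊆ I} (−1)^{|I∖A|}·x(A)·∏_{i∈I∖A} x({i})` (one-cluster cumulants) and
`z(I) = ∑_π (−1)^{|π|−1}·∏_{B∈π} y(B)`, the sum over all interval partitions `π` of `I`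
(partitions all of whose blocks are order-convex in `I`).  Then for every `I` with
`|I| ≥ 2`, `z(I) = s·(1−s)·(1−2s)^{|I|−2}·∏_{i∈I} (b_i − a_i)`. -/
theorem secant_cumulants_toric {K : Type*} [CommRing K] {n : ℕ} (hn : 1 ≤ n)
    (a b : Fin n → K) (s : K)
    (x y z : Finset (Fin n) → K)
    (hx : ∀ I : Finset (Fin n), x I = (1 - s) * ∏ i ∈ I, a i + s * ∏ i ∈ I, b i)
    (hy : ∀ I : Finset (Fin n), y I = ∑ A ∈ I.powerset,
      (-1 : K) ^ (I \ A).card * x A * ∏ i ∈ I \ A, x {i})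
    (hz : ∀ I : Finset (Fin n), z I = ∑ π ∈ Finset.univ.filter
        (fun π : Finpartition I => ∀ B ∈ π.parts,
          ∀ i ∈ B, ∀ k ∈ B, ∀ j ∈ I, i < j → j < k → j ∈ B),
      (-1 : K) ^ (π.parts.card - 1) * ∏ B ∈ π.parts, y B) :
    ∀ I : Finset (Fin n), 2 ≤ I.card →
      z I = s * (1 - s) * (1 - 2 * s) ^ (I.card - 2) * ∏ i ∈ I, (b i - a i) :=
  secant_cumulants_toric_general a b s x y z hx hy hz
end
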